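/- Let n ≥ 2, k ≥ 1, m ≥ 0, and let S_1, …, S_n ⊆ S be action sets. Let (x_i^ng)_{i=1}^n be any nominal greedy profile and (x_i^ag, z_i^ag)_{i=1}^n be any augmented greedy profile for (f, (S_i), k, m). Then f(x_1^ag ∪ … ∪ x_n^ag) ≤ (2 + min(m/k, n−1)) · f(x_1^ng ∪ … ∪ x_n^ng). -/

import Mathlib

open Finset

variable {α : Type*}

/-- `f` is monotone on finsets. -/
def IsMonotoneFn (f : Finset α → ℝ) : Prop := ∀ A B : Finset α, A ⊆ B → f A ≤ f B

/-- `f` is submodular. -/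
def IsSubmodularFn [DecidableEq α] (f : Finset α → ℝ) : Prop :=
  ∀ A B : Finset α, A ⊆ B → ∀ s ∉ B, f (insert s A) - f A ≥ f (insert s B) - f B

/-- Marginal contribution Δ(A|B) = f(A ∪ B) − f(B). -/
def marg [DecidableEq α] (f : Finset α → ℝ) (A B : Finset α) : ℝ := f (A ∪ B) - f B

/-- Δ^l(A|B): best marginal of a subset of `A` of size at most `l`. -/
noncomputable def margSup [DecidableEq α] (f : Finset α → ℝ) (l : ℕ) (A B : Finset α) : ℝ :=
  (A.powerset.filter (fun C => C.card ≤ l)).sup' ⟨∅, by simp⟩ (fun C => marg f C B)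

/-- Union of the first `i` sets: x_0 ∪ ⋯ ∪ x_{i-1}. -/
def pref [DecidableEq α] (x : ℕ → Finset α) (i : ℕ) : Finset α := (Finset.range i).biUnion x

/-- A nominal greedy profile. -/
def NomGreedy [DecidableEq α] (f : Finset α → ℝ) (Ss : ℕ → Finset α) (k n : ℕ)
    (x : ℕ → Finset α) : Prop :=
  ∀ i < n, x i ⊆ Ss i ∧ (x i).card ≤ k ∧
    ∀ c : Finset α, c ⊆ Ss i → c.card ≤ k → f (c ∪ pref x i) ≤ f (x i ∪ pref x i)

/-- An augmented greedy profile. -/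
def AugGreedy [DecidableEq α] (f : Finset α → ℝ) (Ss : ℕ → Finset α) (k m n : ℕ)
    (x z : ℕ → Finset α) : Prop :=
  ∀ i < n,
    (x i ⊆ Ss i ∪ pref z i ∧ (x i).card ≤ k ∧
      ∀ c : Finset α, c ⊆ Ss i ∪ pref z i → c.card ≤ k →
        f (c ∪ pref x i) ≤ f (x i ∪ pref x i)) ∧
    ∃ zk zr : Finset α,
      z i = zk ∪ zr ∧ zk ⊆ Ss i ∧ zk.card ≤ min k m ∧
      (∀ w : Finset α, w ⊆ Ss i → w.card ≤ min k m →
        marg f w (pref x (i + 1)) ≤ marg f zk (pref x (i + 1))) ∧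
      zr ⊆ Ss i ∧ zr.card ≤ m - k

/-- The optimal value OPT(f, (S_i), k) over feasible profiles with n agents. -/
noncomputable def OPTval [DecidableEq α] [Fintype α] (f : Finset α → ℝ) (Ss : ℕ → Finset α)
    (n k : ℕ) : ℝ :=
  ((Finset.univ : Finset (Fin n → Finset α)).filter
      (fun y => ∀ i : Fin n, y i ⊆ Ss (i : ℕ) ∧ (y i).card ≤ k)).sup'
    ⟨(fun _ => ∅), by simp⟩ (fun y => f (Finset.univ.biUnion (fun i => y i)))

/-!
Let N = x₁ⁿᵍ ∪ ⋯ ∪ xₙⁿᵍ; f(N) telescopes into the greedy gains δⱼ = Δ(xⱼⁿᵍ | x₁ⁿᵍ ∪ ⋯ ∪ xⱼ₋₁ⁿᵍ).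
By monotonicity f(A) ≤ f(N) + Δ(A | N) for the augmented outcome A, and Δ(A | N) splits agent by
agent into the gain of the actions agent i takes from its own set Sᵢ and of those it borrows from
earlier z's. Own actions are feasible for nominal agent i, so they gain at most δᵢ: at most f(N) in
total. An exchange argument shows that a single action s ∈ Sⱼ gains at most δⱼ / k on top of N.
An agent borrows at most k actions and agent 1 borrows none, so the borrowed gain is at most
(n − 1) f(N); all borrowed actions lie in the z's, each of size at most m, so it is also at most
(m / k) f(N).
-/

section Submodular

variable [DecidableEq α] {f : Finset α → ℝ}

@[simp]
lemma marg_empty (B : Finset α) : marg f ∅ B = 0 := by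
  simp [marg]

lemma marg_nonneg (hmono : IsMonotoneFn f) (A B : Finset α) : 0 ≤ marg f A B :=
  sub_nonneg.mpr (hmono _ _ subset_union_right)

lemma marg_mono_left (hmono : IsMonotoneFn f) {A A' : Finset α} (h : A ⊆ A') (B : Finset α) :
    marg f A B ≤ marg f A' B :=
  sub_le_sub_right (hmono _ _ (union_subset_union_left h)) _

lemma marg_anti_right (hmono : IsMonotoneFn f) (hsub : IsSubmodularFn f) (C : Finset α)
    {A B : Finset α} (h : A ⊆ B) : marg f C B ≤ marg f C A := by
  induction C using Finset.induction_on with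
  | empty => simp
  | insert s C _ ih =>
    have hstep : f (insert s (C ∪ B)) - f (C ∪ B) ≤ f (insert s (C ∪ A)) - f (C ∪ A) := by
      by_cases hs : s ∈ C ∪ B
      · rw [insert_eq_of_mem hs, sub_self]
        exact sub_nonneg.mpr (hmono _ _ (subset_insert _ _))
      · exact hsub _ _ (union_subset_union_right h) s hs
    simp only [marg, insert_union] at ih ⊢
    linarith

lemma marg_union_le (hmono : IsMonotoneFn f) (hsub : IsSubmodularFn f) (X Y B : Finset α) :
    marg f (X ∪ Y) B ≤ marg f X B + marg f Y B := by
  have hchain : marg f (X ∪ Y) B = marg f X (Y ∪ B) + marg f Y B := by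
    simp only [marg, union_assoc]; ring
  linarith [marg_anti_right hmono hsub X (subset_union_right : B ⊆ Y ∪ B)]

lemma marg_biUnion_le (hmono : IsMonotoneFn f) (hsub : IsSubmodularFn f) {ι : Type*}
    (t : Finset ι) (s : ι → Finset α) (B : Finset α) :
    marg f (t.biUnion s) B ≤ ∑ i ∈ t, marg f (s i) B := by
  rw [← sup_eq_biUnion]
  exact apply_sup_le_sum (f := fun A => marg f A B) (marg_empty B)
    (marg_union_le hmono hsub _ _ B) t

lemma marg_le_card_mul (hmono : IsMonotoneFn f) (hsub : IsSubmodularFn f) {C B : Finset α}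
    {c : ℝ} (h : ∀ s ∈ C, marg f {s} B ≤ c) : marg f C B ≤ C.card * c :=
  calc marg f C B = marg f (C.biUnion singleton) B := by rw [biUnion_singleton_eq_self]
    _ ≤ ∑ s ∈ C, marg f {s} B := marg_biUnion_le hmono hsub C _ B
    _ ≤ C.card • c := sum_le_card_nsmul _ _ _ h
    _ = C.card * c := nsmul_eq_mul _ _

lemma sum_marg_singleton_erase_le (hmono : IsMonotoneFn f) (hsub : IsSubmodularFn f)
    (x P : Finset α) : ∑ t ∈ x, marg f {t} (x.erase t ∪ P) ≤ marg f x P := by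
  induction x using Finset.induction_on with
  | empty => simp
  | insert u y hu ih =>
    have hterm : ∀ t ∈ y,
        marg f {t} ((insert u y).erase t ∪ P) ≤ marg f {t} (y.erase t ∪ P) := by
      intro t ht
      rw [erase_insert_of_ne (ne_of_mem_of_not_mem ht hu).symm]
      exact marg_anti_right hmono hsub _ (union_subset_union_left (subset_insert _ _))
    have hsplit : marg f (insert u y) P = marg f {u} (y ∪ P) + marg f y P := by
      simp only [marg, insert_union, singleton_union]; ring
    rw [sum_insert hu, erase_insert hu, hsplit]
    linarith [sum_le_sum hterm]

end Submodular

section GreedyStep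

variable [DecidableEq α]

def IsGreedyStep (f : Finset α → ℝ) (S : Finset α) (k : ℕ) (P x : Finset α) : Prop :=
  x ⊆ S ∧ x.card ≤ k ∧ ∀ c : Finset α, c ⊆ S → c.card ≤ k → f (c ∪ P) ≤ f (x ∪ P)

namespace IsGreedyStep

variable {f : Finset α → ℝ} {S P x : Finset α} {k : ℕ}

lemma marg_le (hmono : IsMonotoneFn f) (hsub : IsSubmodularFn f) (h : IsGreedyStep f S k P x)
    {c B : Finset α} (hc : c ⊆ S) (hck : c.card ≤ k) (hPB : P ⊆ B) :
    marg f c B ≤ marg f x P :=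
  calc marg f c B ≤ marg f c P := marg_anti_right hmono hsub c hPB
    _ ≤ marg f x P := sub_le_sub_right (h.2.2 c hc hck) _

lemma mul_marg_singleton_le (hmono : IsMonotoneFn f) (hsub : IsSubmodularFn f)
    (h : IsGreedyStep f S k P x) {s : α} (hs : s ∈ S) :
    k * marg f {s} (x ∪ P) ≤ marg f x P := by
  obtain ⟨hxS, hxk, hopt⟩ := h
  rcases hxk.lt_or_eq with hlt | heq
  · have hs0 : marg f {s} (x ∪ P) ≤ 0 := by
      have := hopt (insert s x) (insert_subset hs hxS) ((card_insert_le _ _).trans hlt)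
      simp only [marg, ← union_assoc, singleton_union]
      linarith
    exact (mul_nonpos_of_nonneg_of_nonpos k.cast_nonneg hs0).trans (marg_nonneg hmono x P)
  · -- swapping `s` in for any `t ∈ x` is feasible, hence no better than `x`
    have hswap : ∀ t ∈ x, marg f {s} (x ∪ P) ≤ marg f {t} (x.erase t ∪ P) := by
      intro t ht
      have hcard : (insert s (x.erase t)).card ≤ k := by
        have := card_erase_add_one ht
        have := card_insert_le s (x.erase t)
        omega
      have hfeas := hopt _ (insert_subset hs ((erase_subset t x).trans hxS)) hcard
      have hx : {t} ∪ (x.erase t ∪ P) = x ∪ P := by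
        rw [← union_assoc, singleton_union, insert_erase ht]
      calc marg f {s} (x ∪ P) ≤ marg f {s} (x.erase t ∪ P) :=
            marg_anti_right hmono hsub _ (union_subset_union_left (erase_subset t x))
        _ ≤ marg f {t} (x.erase t ∪ P) := by
            rw [marg, marg, hx, ← union_assoc, singleton_union]
            linarith
    calc (k : ℝ) * marg f {s} (x ∪ P) = ∑ t ∈ x, marg f {s} (x ∪ P) := by
          rw [sum_const, nsmul_eq_mul, heq]
      _ ≤ ∑ t ∈ x, marg f {t} (x.erase t ∪ P) := sum_le_sum hswap
      _ ≤ marg f x P := sum_marg_singleton_erase_le hmono hsub x P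

end IsGreedyStep

end GreedyStep

section Pref

variable [DecidableEq α]

@[simp]
lemma pref_zero (x : ℕ → Finset α) : pref x 0 = ∅ := rfl

lemma pref_succ (x : ℕ → Finset α) (i : ℕ) : pref x (i + 1) = x i ∪ pref x i := by
  simp [pref, range_add_one]

lemma mem_pref {x : ℕ → Finset α} {i : ℕ} {s : α} : s ∈ pref x i ↔ ∃ j < i, s ∈ x j := by
  simp [pref]

lemma pref_mono (x : ℕ → Finset α) : Monotone (pref x) := fun _ _ h =>
  biUnion_subset_biUnion_of_subset_left x (range_subset_range.mpr h)

lemma pref_subset_pref {x y : ℕ → Finset α} (h : ∀ i, x i ⊆ y i) (i : ℕ) :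
    pref x i ⊆ pref y i :=
  biUnion_mono fun j _ => h j

lemma pref_subset_of_forall_subset_pref {b z : ℕ → Finset α} {n : ℕ}
    (h : ∀ i < n, b i ⊆ pref z i) : pref b n ⊆ pref z n := by
  intro s hs
  obtain ⟨i, hi, hsi⟩ := mem_pref.mp hs
  exact pref_mono z hi.le (h i hi hsi)

variable {f : Finset α → ℝ}

lemma marg_pref_eq_sum (x : ℕ → Finset α) (B : Finset α) (n : ℕ) :
    marg f (pref x n) B = ∑ i ∈ range n, marg f (x i) (pref x i ∪ B) := by
  induction n with
  | zero => simp
  | succ n ih =>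
    rw [sum_range_succ, ← ih]
    simp only [marg, pref_succ, union_assoc]
    ring

lemma apply_pref_eq_sum_marg (hnorm : f ∅ = 0) (x : ℕ → Finset α) (n : ℕ) :
    f (pref x n) = ∑ i ∈ range n, marg f (x i) (pref x i) := by
  simpa [marg, hnorm] using marg_pref_eq_sum (f := f) x ∅ n

lemma marg_le_apply_pref (hnorm : f ∅ = 0) (hmono : IsMonotoneFn f) (x : ℕ → Finset α)
    {j n : ℕ} (hj : j < n) : marg f (x j) (pref x j) ≤ f (pref x n) := by
  rw [apply_pref_eq_sum_marg hnorm]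
  exact single_le_sum (fun i _ => marg_nonneg hmono _ _) (mem_range.mpr hj)

lemma apply_pref_le_add_sum_marg_inter_add_sum_marg_sdiff (hmono : IsMonotoneFn f)
    (hsub : IsSubmodularFn f) (x S : ℕ → Finset α) (B : Finset α) (n : ℕ) :
    f (pref x n) ≤ f B + ∑ i ∈ range n, marg f (x i ∩ S i) (pref x i ∪ B)
      + ∑ i ∈ range n, marg f (x i \ S i) (pref x i ∪ B) := by
  have hsplit : ∀ i ∈ range n, marg f (x i) (pref x i ∪ B)
      ≤ marg f (x i ∩ S i) (pref x i ∪ B) + marg f (x i \ S i) (pref x i ∪ B) := by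
    intro i _
    have := marg_union_le hmono hsub (x i \ S i) (x i ∩ S i) (pref x i ∪ B)
    rw [sdiff_union_inter] at this
    linarith
  calc f (pref x n) ≤ f B + marg f (pref x n) B := by
        rw [marg]; linarith [hmono _ _ (subset_union_left : pref x n ⊆ pref x n ∪ B)]
    _ ≤ f B + ∑ i ∈ range n,
          (marg f (x i ∩ S i) (pref x i ∪ B) + marg f (x i \ S i) (pref x i ∪ B)) := by
        rw [marg_pref_eq_sum]; gcongr with i hi; exact hsplit i hi
    _ = _ := by rw [sum_add_distrib, add_assoc]

lemma sum_marg_le_sum_marg_of_subset_pref (hmono : IsMonotoneFn f) (hsub : IsSubmodularFn f)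
    {x b z : ℕ → Finset α} {n : ℕ} (hbx : ∀ i, b i ⊆ x i) (hbz : ∀ i < n, b i ⊆ pref z i)
    (B : Finset α) :
    ∑ i ∈ range n, marg f (b i) (pref x i ∪ B) ≤ ∑ j ∈ range n, marg f (z j) B :=
  calc ∑ i ∈ range n, marg f (b i) (pref x i ∪ B)
        ≤ ∑ i ∈ range n, marg f (b i) (pref b i ∪ B) := sum_le_sum fun i _ =>
          marg_anti_right hmono hsub _ (union_subset_union_left (pref_subset_pref hbx i))
    _ = marg f (pref b n) B := (marg_pref_eq_sum b B n).symm
    _ ≤ marg f (pref z n) B := marg_mono_left hmono (pref_subset_of_forall_subset_pref hbz) B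
    _ ≤ ∑ j ∈ range n, marg f (z j) B := marg_biUnion_le hmono hsub _ _ B

end Pref

lemma sum_range_le_sub_one_mul {g : ℕ → ℝ} {n : ℕ} {C : ℝ} (hn : n ≠ 0) (h0 : g 0 = 0)
    (hg : ∀ i < n, g i ≤ C) : ∑ i ∈ range n, g i ≤ (n - 1) * C := by
  obtain ⟨n, rfl⟩ := Nat.exists_eq_succ_of_ne_zero hn
  rw [sum_range_succ', h0, add_zero]
  calc ∑ i ∈ range n, g (i + 1) ≤ ∑ _i ∈ range n, C :=
        sum_le_sum fun i hi => hg (i + 1) (by simpa using hi)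
    _ = _ := by simp

section Profiles

variable [DecidableEq α] {f : Finset α → ℝ} {Ss : ℕ → Finset α} {k m n : ℕ}
  {xng xag zag : ℕ → Finset α}

lemma NomGreedy.isGreedyStep (hng : NomGreedy f Ss k n xng) {i : ℕ} (hi : i < n) :
    IsGreedyStep f (Ss i) k (pref xng i) (xng i) :=
  hng i hi

lemma NomGreedy.mul_marg_singleton_le (hmono : IsMonotoneFn f) (hsub : IsSubmodularFn f)
    (hng : NomGreedy f Ss k n xng) {j : ℕ} (hj : j < n) {s : α} (hs : s ∈ Ss j) :
    k * marg f {s} (pref xng n) ≤ marg f (xng j) (pref xng j) := by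
  have hbase : xng j ∪ pref xng j ⊆ pref xng n := pref_succ xng j ▸ pref_mono xng hj
  calc (k : ℝ) * marg f {s} (pref xng n) ≤ k * marg f {s} (xng j ∪ pref xng j) := by
        gcongr; exact marg_anti_right hmono hsub _ hbase
    _ ≤ _ := (hng.isGreedyStep hj).mul_marg_singleton_le hmono hsub hs

lemma AugGreedy.isGreedyStep (hag : AugGreedy f Ss k m n xag zag) {i : ℕ} (hi : i < n) :
    IsGreedyStep f (Ss i ∪ pref zag i) k (pref xag i) (xag i) :=
  (hag i hi).1

lemma AugGreedy.subset_and_card_le (hag : AugGreedy f Ss k m n xag zag) {i : ℕ} (hi : i < n) :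
    zag i ⊆ Ss i ∧ (zag i).card ≤ m := by
  obtain ⟨zk, zr, hz, hzkS, hzkc, -, hzrS, hzrc⟩ := (hag i hi).2
  rw [hz]
  exact ⟨union_subset hzkS hzrS, (card_union_le _ _).trans (by omega)⟩

lemma AugGreedy.sdiff_subset_pref (hag : AugGreedy f Ss k m n xag zag) {i : ℕ} (hi : i < n) :
    xag i \ Ss i ⊆ pref zag i := fun _ hs =>
  (mem_union.mp ((hag.isGreedyStep hi).1 (mem_sdiff.mp hs).1)).resolve_left (mem_sdiff.mp hs).2

lemma sum_marg_inter_le (hnorm : f ∅ = 0) (hmono : IsMonotoneFn f) (hsub : IsSubmodularFn f)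
    (hng : NomGreedy f Ss k n xng) (hag : AugGreedy f Ss k m n xag zag) :
    ∑ i ∈ range n, marg f (xag i ∩ Ss i) (pref xag i ∪ pref xng n) ≤ f (pref xng n) := by
  rw [apply_pref_eq_sum_marg hnorm xng n]
  refine sum_le_sum fun i hi => ?_
  rw [mem_range] at hi
  exact (hng.isGreedyStep hi).marg_le hmono hsub inter_subset_right
    ((card_le_card inter_subset_left).trans (hag.isGreedyStep hi).2.1)
    ((pref_mono xng hi.le).trans subset_union_right)

lemma sum_marg_sdiff_le_div_mul (hnorm : f ∅ = 0) (hmono : IsMonotoneFn f) (hsub : IsSubmodularFn f)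
    (hng : NomGreedy f Ss k n xng) (hag : AugGreedy f Ss k m n xag zag)
    (hk : 0 < k) :
    ∑ i ∈ range n, marg f (xag i \ Ss i) (pref xag i ∪ pref xng n)
      ≤ m / k * f (pref xng n) := by
  have hkR : (0 : ℝ) < k := by exact_mod_cast hk
  have hz : ∀ j < n, marg f (zag j) (pref xng n) ≤ m / k * marg f (xng j) (pref xng j) := by
    intro j hj
    obtain ⟨hzS, hzm⟩ := hag.subset_and_card_le hj
    have hδ := marg_nonneg hmono (xng j) (pref xng j)
    calc marg f (zag j) (pref xng n) ≤ (zag j).card * (marg f (xng j) (pref xng j) / k) :=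
          marg_le_card_mul hmono hsub fun s hs => by
            rw [le_div_iff₀ hkR, mul_comm]
            exact hng.mul_marg_singleton_le hmono hsub hj (hzS hs)
      _ ≤ m * (marg f (xng j) (pref xng j) / k) := by gcongr
      _ = _ := by ring
  calc _ ≤ ∑ j ∈ range n, marg f (zag j) (pref xng n) :=
        sum_marg_le_sum_marg_of_subset_pref hmono hsub (fun _ => sdiff_subset)
          (fun _ hi => hag.sdiff_subset_pref hi) _
    _ ≤ ∑ j ∈ range n, m / k * marg f (xng j) (pref xng j) :=
        sum_le_sum fun j hj => hz j (mem_range.mp hj)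
    _ = m / k * f (pref xng n) := by rw [← mul_sum, apply_pref_eq_sum_marg hnorm]

lemma sum_marg_sdiff_le_sub_one_mul (hnorm : f ∅ = 0) (hmono : IsMonotoneFn f) (hsub : IsSubmodularFn f)
    (hng : NomGreedy f Ss k n xng) (hag : AugGreedy f Ss k m n xag zag)
    (hn : n ≠ 0) (hk : 0 < k) :
    ∑ i ∈ range n, marg f (xag i \ Ss i) (pref xag i ∪ pref xng n)
      ≤ (n - 1) * f (pref xng n) := by
  have hkR : (0 : ℝ) < k := by exact_mod_cast hk
  have hN : 0 ≤ f (pref xng n) := hnorm ▸ hmono ∅ _ (empty_subset _)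
  refine sum_range_le_sub_one_mul hn ?_ fun i hi => ?_
  · rw [subset_empty.mp (hag.sdiff_subset_pref (Nat.pos_of_ne_zero hn)), marg_empty]
  · have hsingle : ∀ s ∈ xag i \ Ss i, marg f {s} (pref xng n) ≤ f (pref xng n) / k := by
      intro s hs
      obtain ⟨j, hj, hsj⟩ := mem_pref.mp (hag.sdiff_subset_pref hi hs)
      have hjn := hj.trans hi
      rw [le_div_iff₀ hkR, mul_comm]
      exact (hng.mul_marg_singleton_le hmono hsub hjn
        ((hag.subset_and_card_le hjn).1 hsj)).trans (marg_le_apply_pref hnorm hmono xng hjn)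
    calc marg f (xag i \ Ss i) (pref xag i ∪ pref xng n)
          ≤ marg f (xag i \ Ss i) (pref xng n) := marg_anti_right hmono hsub _ subset_union_right
      _ ≤ (xag i \ Ss i).card * (f (pref xng n) / k) := marg_le_card_mul hmono hsub hsingle
      _ ≤ k * (f (pref xng n) / k) := by
          gcongr
          exact_mod_cast (card_le_card sdiff_subset).trans (hag.isGreedyStep hi).2.1
      _ = f (pref xng n) := by field_simp

end Profiles

theorem stmt3_general [DecidableEq α] (f : Finset α → ℝ)
    (hnorm : f ∅ = 0) (hmono : IsMonotoneFn f) (hsub : IsSubmodularFn f)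
    (n k m : ℕ) (hn : 2 ≤ n) (hk : 1 ≤ k) (Ss : ℕ → Finset α)
    (xng : ℕ → Finset α) (hng : NomGreedy f Ss k n xng)
    (xag zag : ℕ → Finset α) (hag : AugGreedy f Ss k m n xag zag) :
    f (pref xag n) ≤ (2 + min ((m : ℝ) / k) ((n : ℝ) - 1)) * f (pref xng n) := by
  have hN : 0 ≤ f (pref xng n) := hnorm ▸ hmono ∅ _ (empty_subset _)
  have hborrowed : ∑ i ∈ range n, marg f (xag i \ Ss i) (pref xag i ∪ pref xng n)
      ≤ min ((m : ℝ) / k) ((n : ℝ) - 1) * f (pref xng n) := by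
    rw [min_mul_of_nonneg _ _ hN]
    exact le_min (sum_marg_sdiff_le_div_mul hnorm hmono hsub hng hag hk)
      (sum_marg_sdiff_le_sub_one_mul hnorm hmono hsub hng hag (by omega) hk)
  have hown := sum_marg_inter_le hnorm hmono hsub hng hag
  have hsplit :=
    apply_pref_le_add_sum_marg_inter_add_sum_marg_sdiff hmono hsub xag Ss (pref xng n) n
  rw [add_mul]
  linarith

/-- Theorem 2, upper bound: augmented greedy gains at most a factor 2 + min(m/k, n−1)
over nominal greedy. -/
theorem stmt3 [DecidableEq α] [Fintype α] (f : Finset α → ℝ)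
    (hnorm : f ∅ = 0) (hmono : IsMonotoneFn f) (hsub : IsSubmodularFn f)
    (n k m : ℕ) (hn : 2 ≤ n) (hk : 1 ≤ k) (Ss : ℕ → Finset α)
    (xng : ℕ → Finset α) (hng : NomGreedy f Ss k n xng)
    (xag zag : ℕ → Finset α) (hag : AugGreedy f Ss k m n xag zag) :
    f (pref xag n) ≤ (2 + min ((m : ℝ) / k) ((n : ℝ) - 1)) * f (pref xng n) :=
  stmt3_general f hnorm hmono hsub n k m hn hk Ss xng hng xag zag hag
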